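/- (Knapp-type sharpness on the paraboloid) Let 0 < α < d−1 and let ν be a Borel probability measure supported on P^{d−1} := {(x', |x'|²) : x' ∈ [0,1]^{d−1}} whose support has Hausdorff dimension α, satisfying ν(B(x,r)) ≤ C r^α for all x and r > 0. If the restriction estimate ‖(f dν)^∧‖_{L^p(ℝ^d)} ≤ C_{p,q} ‖f‖_{L^q(ν)} holds for all f ∈ L^q(ν), then p ≥ q'(d+1)/α, where 1/q + 1/q' = 1. -/

import Mathlib

/-!
Knapp's example. For `a` on the paraboloid and `s > 0`, the phase `⟪x - a, ξ⟫` stays below `1/6`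
for all `x` in the cap `P ∩ B(a, s)` and all `ξ` in a sheared box of sides `≈ s⁻¹` (horizontal)
and `≈ s⁻²` (vertical), of volume `≈ s^{-(n+2)}`: by the parabolic geometry, the vertical
deviation of the cap from its tangent plane is `|x' - a'|² ≤ s²`. So the Fourier transform of the
indicator of `B(a, s)` has modulus at least `ν(B(a, s))/2` on that box, and testing the restriction
estimate on it gives `ν(B(a, s)) ≲ s^{q'(n+2)/p}`. By the mass distribution principle this upper
regularity forces `q'(n+2)/p ≤ dim_H supp ν = α`.
-/

open MeasureTheory Filter

/-- The topological support of a measure. -/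
def measSupport {X : Type*} [TopologicalSpace X] [MeasurableSpace X] (μ : Measure X) : Set X :=
  {x | ∀ U ∈ nhds x, 0 < μ U}

/-- The (compact piece of the) paraboloid `{(x', |x'|²) : x' ∈ [0,1]^n}` inside `ℝ^{n+1}`. -/
def paraboloid (n : ℕ) : Set (EuclideanSpace ℝ (Fin (n + 1))) :=
  {y | (∀ i : Fin n, y (Fin.castSucc i) ∈ Set.Icc (0 : ℝ) 1) ∧
    y (Fin.last n) = ∑ i : Fin n, (y (Fin.castSucc i)) ^ 2}

open Metric Set
open scoped ENNReal NNReal Topology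

theorem measSupport_eq_support {X : Type*} [TopologicalSpace X] [MeasurableSpace X]
    (μ : Measure X) : measSupport μ = μ.support := by
  ext x
  exact (Measure.mem_support_iff_forall x).symm

section MassDistribution

variable {X : Type*} [MetricSpace X] [MeasurableSpace X] {ν : Measure X} {P : Set X}
  {C β : ℝ≥0}

theorem measure_le_mul_ediam_rpow_of_measure_closedBall_le (hP : ν Pᶜ = 0)
    (h : ∀ a ∈ P, ∀ r : ℝ, 0 < r → ν (closedBall a r) ≤ C * ENNReal.ofReal r ^ (β : ℝ))
    {s : Set X} (hs : ediam s ≠ ∞) : ν s ≤ C * ediam s ^ (β : ℝ) := by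
  rw [← measure_inter_conull hP]
  rcases (s ∩ P).eq_empty_or_nonempty with hsP | ⟨a, has, haP⟩
  · simp [hsP]
  have hbdd : Bornology.IsBounded s := isBounded_iff_ediam_ne_top.2 hs
  -- `s ∩ P` lies in every ball `B(a, t)` with `t > diam s`; `diam s` itself may be `0`.
  have hlim : Tendsto (fun t : ℝ => (C : ℝ≥0∞) * ENNReal.ofReal t ^ (β : ℝ)) (𝓝[>] (diam s))
      (𝓝 (C * ediam s ^ (β : ℝ))) := by
    rw [← ENNReal.ofReal_toReal hs]
    exact ((ENNReal.continuous_const_mul ENNReal.coe_ne_top).comp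
      (ENNReal.continuous_rpow_const.comp ENNReal.continuous_ofReal)).continuousAt.tendsto.mono_left
      nhdsWithin_le_nhds
  refine ge_of_tendsto hlim (eventually_nhdsWithin_of_forall fun t ht => ?_)
  refine (measure_mono fun y hy => ?_).trans (h a haP t (diam_nonneg.trans_lt ht))
  exact mem_closedBall.2 ((dist_le_diam_of_mem hbdd hy.1 has).trans ht.le)

/-- The mass distribution principle. -/
theorem le_dimH_of_measure_closedBall_le [BorelSpace X] (hP : ν Pᶜ = 0)
    (h : ∀ a ∈ P, ∀ r : ℝ, 0 < r → ν (closedBall a r) ≤ C * ENNReal.ofReal r ^ (β : ℝ))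
    {S : Set X} (hS : ν S ≠ 0) : (β : ℝ≥0∞) ≤ dimH S := by
  have hle : (C : ℝ≥0∞)⁻¹ • ν ≤ μH[β] := by
    refine Measure.le_hausdorffMeasure _ _ 1 one_pos fun s hs => ?_
    calc (C : ℝ≥0∞)⁻¹ * ν s ≤ (C : ℝ≥0∞)⁻¹ * (C * ediam s ^ (β : ℝ)) :=
          mul_le_mul_right (measure_le_mul_ediam_rpow_of_measure_closedBall_le hP h
            (ne_top_of_le_ne_top ENNReal.one_ne_top hs)) _
      _ ≤ ediam s ^ (β : ℝ) := by
          rw [← mul_assoc]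
          exact mul_le_of_le_one_left' (ENNReal.inv_mul_le_one _)
  refine le_dimH_of_hausdorffMeasure_ne_zero (ne_bot_of_le_ne_bot ?_ (hle S))
  simp [hS]

end MassDistribution

theorem le_rpow_of_mul_le_mul_rpow {m A K θ : ℝ} (hm : 0 ≤ m) (hA : 0 < A) (hK : 0 ≤ K)
    (hθ : θ < 1) (h : m * A ≤ K * m ^ θ) : m ≤ (K / A) ^ (1 - θ)⁻¹ := by
  rcases hm.eq_or_lt with rfl | hm
  · positivity
  have hmθ : m ^ (1 - θ) ≤ K / A := by
    rw [Real.rpow_sub hm, Real.rpow_one, div_le_div_iff₀ (by positivity) hA]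
    linarith
  calc m = (m ^ (1 - θ)) ^ (1 - θ)⁻¹ := by
        rw [← Real.rpow_mul hm.le, mul_inv_cancel₀ (by linarith), Real.rpow_one]
    _ ≤ (K / A) ^ (1 - θ)⁻¹ :=
        Real.rpow_le_rpow (by positivity) hmθ (inv_nonneg.2 (by linarith))

theorem mul_measure_rpow_le_eLpNorm {α ε : Type*} [MeasurableSpace α] [ENorm ε]
    {μ : Measure α} {f : α → ε} {T : Set α} (hT : MeasurableSet T) {p : ℝ≥0∞} (hp0 : p ≠ 0)
    (hp : p ≠ ∞) {c : ℝ≥0∞} (h : ∀ x ∈ T, c ≤ ‖f x‖ₑ) :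
    c * μ T ^ (1 / p.toReal) ≤ eLpNorm f p μ := by
  rw [← enorm_eq_self c, ← eLpNorm_indicator_const hT hp0 hp]
  refine eLpNorm_mono_enorm fun x => ?_
  by_cases hx : x ∈ T
  · simpa [hx] using h x hx
  · simp [hx]

noncomputable section

section Fourier

open Complex

variable {E : Type*} [NormedAddCommGroup E] [InnerProductSpace ℝ E]

/-- The Fourier transform `(f dν)^∧` of the measure `f dν`. -/
def measureFourier [MeasurableSpace E] (ν : Measure E) (f : E → ℂ) (ξ : E) : ℂ :=
  ∫ x, f x * exp (-(2 * Real.pi * I) * ((inner ℝ x ξ : ℝ) : ℂ)) ∂ν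

def RestrictionEstimate [MeasureSpace E] (ν : Measure E) (p q C : ℝ) : Prop :=
  ∀ f : E → ℂ, MemLp f (ENNReal.ofReal q) ν →
    eLpNorm (measureFourier ν f) (ENNReal.ofReal p) volume ≤
      ENNReal.ofReal C * eLpNorm f (ENNReal.ofReal q) ν

theorem measureReal_div_two_le_norm_measureFourier_indicator [MeasurableSpace E]
    [OpensMeasurableSpace E] (ν : Measure E) [IsFiniteMeasure ν] {B : Set E}
    (hB : MeasurableSet B) {a ξ : E} (h : ∀ᵐ x ∂ν, x ∈ B → |inner ℝ (x - a) ξ| ≤ 1 / 6) :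
    ν.real B / 2 ≤ ‖measureFourier ν (B.indicator fun _ => 1) ξ‖ := by
  set θ : E → ℝ := fun x => 2 * Real.pi * inner ℝ (x - a) ξ
  -- multiplying by the unimodular `c` recentres the phase at `a`
  set c : ℂ := exp ((2 * Real.pi * inner ℝ a ξ : ℝ) * I)
  have hrot : (fun x => c * ((B.indicator fun _ => 1) x *
      exp (-(2 * Real.pi * I) * ((inner ℝ x ξ : ℝ) : ℂ)))) =
      B.indicator fun x => exp ((-θ x : ℝ) * I) := by
    ext x
    by_cases hx : x ∈ B
    · simp only [indicator_of_mem hx, one_mul, c, θ, ← Complex.exp_add, inner_sub_left]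
      push_cast
      ring_nf
    · simp [hx]
  have hcos : ∀ᵐ x ∂ν.restrict B, 1 / 2 ≤ Real.cos (θ x) := by
    filter_upwards [ae_restrict_of_ae h, ae_restrict_mem hB] with x hx hxB
    rw [← Real.cos_abs, ← Real.cos_pi_div_three]
    refine Real.cos_le_cos_of_nonneg_of_le_pi (abs_nonneg _) (by linarith [Real.pi_pos]) ?_
    rw [abs_mul, abs_of_pos Real.two_pi_pos]
    nlinarith [hx hxB, Real.pi_pos]
  have hθ : Continuous θ := by fun_prop
  calc ν.real B / 2 = ∫ x in B, (1 / 2 : ℝ) ∂ν := by simp [div_eq_mul_inv]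
    _ ≤ ∫ x in B, Real.cos (θ x) ∂ν :=
        integral_mono_ae (integrable_const _)
          (Integrable.of_bound (by fun_prop) 1 (ae_of_all _ fun x => Real.abs_cos_le_one _)) hcos
    _ = ∫ x in B, (exp ((-θ x : ℝ) * I)).re ∂ν := by
        simp only [exp_ofReal_mul_I_re, Real.cos_neg]
    _ = (∫ x in B, exp ((-θ x : ℝ) * I) ∂ν).re :=
        integral_re (Integrable.of_bound (by fun_prop) 1
          (ae_of_all _ fun x => (norm_exp_ofReal_mul_I _).le))
    _ = (c * measureFourier ν (B.indicator fun _ => 1) ξ).re := by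
        rw [measureFourier, ← integral_const_mul, hrot, integral_indicator hB]
    _ ≤ ‖c * measureFourier ν (B.indicator fun _ => 1) ξ‖ := re_le_norm _
    _ = ‖measureFourier ν (B.indicator fun _ => 1) ξ‖ := by
        rw [norm_mul, norm_exp_ofReal_mul_I, one_mul]

end Fourier

/-! On `Knapp.slab a s` the cap `paraboloid n ∩ B(a, s)` has phase `|⟪x - a, ξ⟫| ≤ 1/6`: the shear
adapts the frequency to the tangent plane at `a`, and the box sides `(12 (n+1) s)⁻¹` and
`(12 s²)⁻¹` make the horizontal and the vertical part of the phase each at most `1/12`. -/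
namespace Knapp

variable {n : ℕ}

def shear (a : EuclideanSpace ℝ (Fin (n + 1))) :
    EuclideanSpace ℝ (Fin (n + 1)) →ₗ[ℝ] EuclideanSpace ℝ (Fin (n + 1)) :=
  LinearMap.transvection (EuclideanSpace.proj (𝕜 := ℝ) (Fin.last n)).toLinearMap
    (2 • (a - EuclideanSpace.single (Fin.last n) (a (Fin.last n))))

def box (n : ℕ) (s : ℝ) : Set (EuclideanSpace ℝ (Fin (n + 1))) :=
  WithLp.ofLp ⁻¹' univ.pi fun j =>
    Icc 0 (Fin.snoc (α := fun _ => ℝ) (fun _ => (12 * (n + 1) * s)⁻¹) (12 * s ^ 2)⁻¹ j)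

def slab (a : EuclideanSpace ℝ (Fin (n + 1))) (s : ℝ) : Set (EuclideanSpace ℝ (Fin (n + 1))) :=
  shear a ⁻¹' box n s

theorem shear_apply_castSucc (a ξ : EuclideanSpace ℝ (Fin (n + 1))) (i : Fin n) :
    shear a ξ i.castSucc = ξ i.castSucc + 2 * ξ (Fin.last n) * a i.castSucc := by
  simp [shear, LinearMap.transvection.apply, (Fin.castSucc_lt_last i).ne]
  ring

theorem shear_apply_last (a ξ : EuclideanSpace ℝ (Fin (n + 1))) :
    shear a ξ (Fin.last n) = ξ (Fin.last n) := by
  simp [shear, LinearMap.transvection.apply]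

theorem det_shear (a : EuclideanSpace ℝ (Fin (n + 1))) : LinearMap.det (shear a) = 1 := by
  simp [shear]

theorem measurableSet_slab (a : EuclideanSpace ℝ (Fin (n + 1))) (s : ℝ) :
    MeasurableSet (slab a s) :=
  (shear a).continuous_of_finiteDimensional.measurable
    ((MeasurableSet.univ_pi fun _ => measurableSet_Icc).preimage (WithLp.measurable_ofLp _ _))

theorem volume_slab (a : EuclideanSpace ℝ (Fin (n + 1))) {s : ℝ} (hs : 0 < s) :
    volume (slab a s) = ENNReal.ofReal ((12 * (n + 1) * s)⁻¹ ^ n * (12 * s ^ 2)⁻¹) := by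
  rw [slab, Measure.addHaar_preimage_linearMap _ (by simp [det_shear]), det_shear, inv_one,
    abs_one, ENNReal.ofReal_one, one_mul, box, (PiLp.volume_preserving_ofLp _).measure_preimage
      (MeasurableSet.univ_pi fun _ => measurableSet_Icc).nullMeasurableSet, volume_pi_pi]
  simp only [Real.volume_Icc, sub_zero, Fin.prod_univ_castSucc, Fin.snoc_castSucc, Fin.snoc_last,
    Finset.prod_const, Finset.card_univ, Fintype.card_fin]
  rw [← ENNReal.ofReal_pow (by positivity), ← ENNReal.ofReal_mul (by positivity)]

theorem inner_sub_eq_of_mem_paraboloid {x a : EuclideanSpace ℝ (Fin (n + 1))}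
    (hx : x ∈ paraboloid n) (ha : a ∈ paraboloid n) (ξ : EuclideanSpace ℝ (Fin (n + 1))) :
    inner ℝ (x - a) ξ = ∑ i : Fin n, (x i.castSucc - a i.castSucc) * shear a ξ i.castSucc +
      ξ (Fin.last n) * ∑ i : Fin n, (x i.castSucc - a i.castSucc) ^ 2 := by
  simp only [PiLp.inner_apply, RCLike.inner_apply, conj_trivial, PiLp.sub_apply,
    Fin.sum_univ_castSucc, shear_apply_castSucc, hx.2, ha.2, ← Finset.sum_sub_distrib,
    Finset.mul_sum, ← Finset.sum_add_distrib]
  exact Finset.sum_congr rfl fun i _ => by ring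

theorem sum_sq_sub_castSucc_le_dist_sq (x a : EuclideanSpace ℝ (Fin (n + 1))) :
    ∑ i : Fin n, (x i.castSucc - a i.castSucc) ^ 2 ≤ dist x a ^ 2 := by
  rw [EuclideanSpace.dist_eq, Real.sq_sqrt (by positivity), Fin.sum_univ_castSucc]
  simp only [Real.dist_eq, sq_abs]
  exact le_add_of_nonneg_right (sq_nonneg _)

theorem abs_inner_sub_le_of_mem_slab {x a ξ : EuclideanSpace ℝ (Fin (n + 1))}
    (hx : x ∈ paraboloid n) (ha : a ∈ paraboloid n) {s : ℝ} (hs : 0 < s) (hxa : dist x a ≤ s)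
    (hξ : ξ ∈ slab a s) : |inner ℝ (x - a) ξ| ≤ 1 / 6 := by
  have hη (j : Fin (n + 1)) := hξ j (mem_univ j)
  have hhor : |∑ i : Fin n, (x i.castSucc - a i.castSucc) * shear a ξ i.castSucc| ≤ 1 / 12 := by
    calc _ ≤ ∑ i : Fin n, |x i.castSucc - a i.castSucc| * shear a ξ i.castSucc := by
          refine (Finset.abs_sum_le_sum_abs _ _).trans_eq (Finset.sum_congr rfl fun i _ => ?_)
          rw [abs_mul, abs_of_nonneg (hη i.castSucc).1]
      _ ≤ ∑ i : Fin n, s * (12 * (n + 1) * s)⁻¹ := by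
          refine Finset.sum_le_sum fun i _ => mul_le_mul ?_ ?_ (hη i.castSucc).1 hs.le
          · rw [← Real.dist_eq]
            exact (PiLp.dist_apply_le x a _).trans hxa
          · simpa using (hη i.castSucc).2
      _ ≤ 1 / 12 := by
          rw [Finset.sum_const, Finset.card_univ, Fintype.card_fin, nsmul_eq_mul]
          field_simp
          linarith
  have hvert : |ξ (Fin.last n) * ∑ i : Fin n, (x i.castSucc - a i.castSucc) ^ 2| ≤ 1 / 12 := by
    have hξl := hη (Fin.last n)
    simp only [shear_apply_last, Fin.snoc_last] at hξl
    rw [abs_of_nonneg (mul_nonneg hξl.1 (by positivity))]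
    calc _ ≤ (12 * s ^ 2)⁻¹ * s ^ 2 :=
          mul_le_mul hξl.2 ((sum_sq_sub_castSucc_le_dist_sq x a).trans
            (pow_le_pow_left₀ dist_nonneg hxa 2)) (by positivity) (by positivity)
      _ = 1 / 12 := by field_simp
  rw [inner_sub_eq_of_mem_paraboloid hx ha]
  linarith [abs_add_le (∑ i : Fin n, (x i.castSucc - a i.castSucc) * shear a ξ i.castSucc)
    (ξ (Fin.last n) * ∑ i : Fin n, (x i.castSucc - a i.castSucc) ^ 2)]

end Knapp

end

namespace RestrictionEstimate

variable {n : ℕ} {ν : Measure (EuclideanSpace ℝ (Fin (n + 1)))} [IsFiniteMeasure ν] {p q Cr : ℝ}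

theorem knapp_bound (hrest : RestrictionEstimate ν p q Cr) (hP : ν (paraboloid n)ᶜ = 0)
    (hp : 0 < p) (hq : 0 < q) (hCr : 0 ≤ Cr) {a : EuclideanSpace ℝ (Fin (n + 1))}
    (ha : a ∈ paraboloid n) {s : ℝ} (hs : 0 < s) :
    ν.real (closedBall a s) / 2 * ((12 * (n + 1) * s)⁻¹ ^ n * (12 * s ^ 2)⁻¹) ^ (1 / p) ≤
      Cr * ν.real (closedBall a s) ^ (1 / q) := by
  set B := closedBall a s
  have hB : MeasurableSet B := isClosed_closedBall.measurableSet
  have hlow : ∀ ξ ∈ Knapp.slab a s,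
      ENNReal.ofReal (ν.real B / 2) ≤ ‖measureFourier ν (B.indicator fun _ => 1) ξ‖ₑ := by
    intro ξ hξ
    rw [← ofReal_norm]
    refine ENNReal.ofReal_le_ofReal
      (measureReal_div_two_le_norm_measureFourier_indicator ν hB (a := a) ?_)
    filter_upwards [ae_iff.2 hP] with x hx hxB
    exact Knapp.abs_inner_sub_le_of_mem_slab hx ha hs (mem_closedBall.1 hxB) hξ
  have key := (mul_measure_rpow_le_eLpNorm (Knapp.measurableSet_slab a s) (by simpa using hp)
    ENNReal.ofReal_ne_top hlow).trans (hrest _ ((memLp_const 1).indicator hB))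
  rw [eLpNorm_indicator_const hB (by simpa using hq) ENNReal.ofReal_ne_top,
    Knapp.volume_slab a hs, ← ofReal_measureReal, ENNReal.toReal_ofReal hp.le,
    ENNReal.toReal_ofReal hq.le, enorm_one, one_mul,
    ENNReal.ofReal_rpow_of_nonneg (by positivity) (by positivity),
    ENNReal.ofReal_rpow_of_nonneg measureReal_nonneg (by positivity),
    ← ENNReal.ofReal_mul (by positivity), ← ENNReal.ofReal_mul hCr] at key
  exact (ENNReal.ofReal_le_ofReal_iff (by positivity)).1 key

theorem exists_measure_closedBall_le (hrest : RestrictionEstimate ν p q Cr)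
    (hP : ν (paraboloid n)ᶜ = 0) (hp : 0 < p) (hq : 1 < q) {q' : ℝ} (hq' : 1 / q + 1 / q' = 1)
    (hCr : 0 ≤ Cr) :
    ∃ C : ℝ≥0, ∀ a ∈ paraboloid n, ∀ s : ℝ, 0 < s →
      ν (closedBall a s) ≤ C * ENNReal.ofReal s ^ (q' * (n + 2) / p) := by
  set c : ℝ := (12 * (n + 1)) ^ n * 12
  refine ⟨((2 * Cr) ^ q' * c ^ (q' / p)).toNNReal, fun a ha s hs => ?_⟩
  have hvol : (12 * (n + 1) * s)⁻¹ ^ n * (12 * s ^ 2)⁻¹ = (c * s ^ ((n : ℝ) + 2))⁻¹ := by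
    rw [show (n : ℝ) + 2 = ((n + 2 : ℕ) : ℝ) by push_cast; ring, Real.rpow_natCast]
    simp only [c, mul_inv, inv_pow, mul_pow, pow_add]
    ring
  have hq'eq : (1 - 1 / q)⁻¹ = q' := by
    rw [show 1 - 1 / q = 1 / q' by linarith, one_div, inv_inv]
  have hm := le_rpow_of_mul_le_mul_rpow (m := ν.real (closedBall a s)) measureReal_nonneg
    (A := (c * s ^ ((n : ℝ) + 2))⁻¹ ^ (1 / p) / 2) (by positivity) hCr (θ := 1 / q)
    ((div_lt_one (by linarith)).2 hq)
    (by linarith [hvol ▸ hrest.knapp_bound hP hp (by linarith) hCr ha hs])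
  have hbound : (Cr / ((c * s ^ ((n : ℝ) + 2))⁻¹ ^ (1 / p) / 2)) ^ (1 - 1 / q)⁻¹ =
      (2 * Cr) ^ q' * c ^ (q' / p) * s ^ (q' * (n + 2) / p) := by
    rw [hq'eq, Real.inv_rpow (by positivity), div_div_eq_mul_div, div_inv_eq_mul,
      Real.mul_rpow (by positivity) (by positivity), ← Real.rpow_mul (by positivity),
      Real.mul_rpow (x := c) (by positivity) (by positivity), ← Real.rpow_mul hs.le]
    ring_nf
  calc ν (closedBall a s) = ENNReal.ofReal (ν.real (closedBall a s)) := by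
        rw [ofReal_measureReal]
    _ ≤ ENNReal.ofReal ((2 * Cr) ^ q' * c ^ (q' / p) * s ^ (q' * (n + 2) / p)) :=
        ENNReal.ofReal_le_ofReal (hm.trans_eq hbound)
    _ = _ := by rw [ENNReal.ofReal_mul (by positivity), ENNReal.ofReal_rpow_of_pos hs]; rfl

end RestrictionEstimate

theorem stmt_7_general (n : ℕ) (α : ℝ) (hα0 : 0 < α)
    (ν : Measure (EuclideanSpace ℝ (Fin (n + 1)))) [IsProbabilityMeasure ν]
    (hP : ν (paraboloid n)ᶜ = 0)
    (hdim : dimH (measSupport ν) = ENNReal.ofReal α)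
    (p q q' Cr : ℝ) (hq : 1 ≤ q) (hq' : 1 / q + 1 / q' = 1) (hp : 1 ≤ p) (hCr : 0 < Cr)
    (hrest : ∀ f : EuclideanSpace ℝ (Fin (n + 1)) → ℂ, MemLp f (ENNReal.ofReal q) ν →
      eLpNorm (fun ξ : EuclideanSpace ℝ (Fin (n + 1)) =>
          ∫ x, f x * Complex.exp (-(2 * Real.pi * Complex.I) * ((inner ℝ x ξ : ℝ) : ℂ)) ∂ν)
        (ENNReal.ofReal p) volume ≤
      ENNReal.ofReal Cr * eLpNorm f (ENNReal.ofReal q) ν) :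
    q' * (n + 2) / α ≤ p := by
  have hp0 : 0 < p := by linarith
  rcases hq.eq_or_lt with rfl | hq1
  · -- for `q = 1` the hypothesis `1 / q' = 0` holds only through the junk value `1 / 0 = 0`
    have hq'0 : q' = 0 := by simpa using hq'
    simp [hq'0, hp0.le]
  have hq'0 : 0 < q' := one_div_pos.1 (by linarith [one_div_lt_one_div_of_lt one_pos hq1])
  have hβ : 0 ≤ q' * (n + 2) / p := by positivity
  obtain ⟨C, hC⟩ := RestrictionEstimate.exists_measure_closedBall_le hrest hP hp0 hq1 hq' hCr.le
  have hsupp : ν ν.support ≠ 0 := by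
    rw [(prob_compl_eq_zero_iff Measure.isClosed_support.measurableSet).1
      Measure.measure_compl_support]
    exact one_ne_zero
  have hdimβ : ENNReal.ofReal (q' * (n + 2) / p) ≤ ENNReal.ofReal α := by
    rw [← hdim, measSupport_eq_support]
    exact le_dimH_of_measure_closedBall_le (β := (q' * (n + 2) / p).toNNReal) hP
      (fun a ha r hr => by simpa [Real.coe_toNNReal _ hβ] using hC a ha r hr) hsupp
  rw [ENNReal.ofReal_le_ofReal_iff hα0.le, div_le_iff₀ hp0] at hdimβ
  rw [div_le_iff₀ hα0]
  linarith

theorem stmt_7 (n : ℕ) (hn : 1 ≤ n) (α : ℝ) (hα0 : 0 < α) (hα1 : α < n)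
    (ν : Measure (EuclideanSpace ℝ (Fin (n + 1)))) [IsProbabilityMeasure ν]
    (hP : ν (paraboloid n)ᶜ = 0)
    (hdim : dimH (measSupport ν) = ENNReal.ofReal α)
    (Cb : ℝ) (hCb : 0 < Cb)
    (hball : ∀ (x : EuclideanSpace ℝ (Fin (n + 1))) (r : ℝ), 0 < r →
      ν (Metric.closedBall x r) ≤ ENNReal.ofReal (Cb * r ^ α))
    (p q q' Cr : ℝ) (hq : 1 ≤ q) (hq' : 1 / q + 1 / q' = 1) (hp : 1 ≤ p) (hCr : 0 < Cr)
    (hrest : ∀ f : EuclideanSpace ℝ (Fin (n + 1)) → ℂ, MemLp f (ENNReal.ofReal q) ν →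
      eLpNorm (fun ξ : EuclideanSpace ℝ (Fin (n + 1)) =>
          ∫ x, f x * Complex.exp (-(2 * Real.pi * Complex.I) * ((inner ℝ x ξ : ℝ) : ℂ)) ∂ν)
        (ENNReal.ofReal p) volume ≤
      ENNReal.ofReal Cr * eLpNorm f (ENNReal.ofReal q) ν) :
    q' * (n + 2) / α ≤ p :=
  stmt_7_general n α hα0 ν hP hdim p q q' Cr hq hq' hp hCr hrest
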